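/- arXiv:1003.4245 — 2 statements merged into one kernel-verified Lean document; each statement's English description precedes it below -/
import Mathlib

section
/- Let $a,b \in (0,\infty]$ and $g : \mathbb{R}^n \to \mathbb{R}^n$ be continuously differentiable. Define $F : (-a,b) \times \mathbb{R}^n \to (-a,b) \times \mathbb{R}^n$ by $F(U,X) = (U, X + g(X)\,\max(U,0))$. Then there exists an open set $W \subseteq (-a,b) \times \mathbb{R}^n$ containing $(-a,0] \times \mathbb{R}^n$ such that the restriction of $F$ to $W$ is injective. -/
open Set

/-!
On the closed ball of radius `m` the `C¹` map `g` is Lipschitz with some constant `K m`, so for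
`U⁺ K m < 1` the map `X ↦ X + U⁺ g X` is the identity plus a contraction there, hence injective.
The union over `m` of the open sets `{‖X‖ < m, U⁺ K m < 1}` contains the half-space `U ≤ 0`, and two
points of it with the same image lie in a single ball whose constant is small enough for both.
-/

open Metric NNReal

theorem LipschitzOnWith.injOn_add_of_lt_one {E : Type*} [NormedAddCommGroup E] {f : E → E}
    {K : ℝ≥0} {s : Set E} (hf : LipschitzOnWith K f s) (hK : K < 1) :
    InjOn (fun x => x + f x) s := by
  intro x hx y hy hxy
  have hsub : x - y = f y - f x := by
    simp only at hxy
    rw [sub_eq_sub_iff_add_eq_add, hxy, add_comm]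
  have hle : ‖x - y‖ ≤ K * ‖x - y‖ :=
    calc ‖x - y‖ = ‖f y - f x‖ := by rw [hsub]
      _ ≤ K * ‖y - x‖ := hf.norm_sub_le hy hx
      _ = K * ‖x - y‖ := by rw [norm_sub_rev]
  have hK' : (K : ℝ) < 1 := by exact_mod_cast hK
  have hzero : ‖x - y‖ = 0 := by nlinarith [norm_nonneg (x - y)]
  exact sub_eq_zero.mp (norm_eq_zero.mp hzero)

section Penrose

variable {E : Type*} [NormedAddCommGroup E] [NormedSpace ℝ E]

/-- The spatial part of the discontinuous Penrose transformation for impulsive pp-waves. -/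
def penroseMap (g : E → E) (p : ℝ × E) : ℝ × E :=
  (p.1, p.2 + max p.1 0 • g p.2)

theorem penroseMap_injOn_of_lipschitzOnWith {g : E → E} {K : ℝ≥0} {s : Set E}
    (hg : LipschitzOnWith K g s) :
    InjOn (penroseMap g) {p : ℝ × E | p.2 ∈ s ∧ max p.1 0 * K < 1} := by
  intro p hp q hq h
  have hU : p.1 = q.1 := (Prod.ext_iff.1 h).1
  have hX : p.2 + max q.1 0 • g p.2 = q.2 + max q.1 0 • g q.2 := by
    simpa only [penroseMap, hU] using congrArg Prod.snd h
  have hcontr : ‖max q.1 0‖₊ * K < 1 := by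
    rw [← NNReal.coe_lt_coe, NNReal.coe_mul, coe_nnnorm, Real.norm_of_nonneg (le_max_right _ _)]
    exact hq.2
  exact Prod.ext hU
    (((lipschitzWith_smul (max q.1 0)).comp_lipschitzOnWith hg).injOn_add_of_lt_one hcontr
      hp.1 hq.1 hX)

theorem ContDiff.exists_isOpen_injOn_penroseMap [ProperSpace E] {g : E → E}
    (hg : ContDiff ℝ 1 g) :
    ∃ W : Set (ℝ × E), IsOpen W ∧ {p : ℝ × E | p.1 ≤ 0} ⊆ W ∧ InjOn (penroseMap g) W := by
  have hlip : ∀ m : ℕ, ∃ K, LipschitzOnWith K g (closedBall 0 m) := fun m =>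
    hg.contDiffOn.exists_lipschitzOnWith one_ne_zero (convex_closedBall _ _)
      (isCompact_closedBall _ _)
  choose K hK using hlip
  refine ⟨⋃ m : ℕ, {p : ℝ × E | ‖p.2‖ < m ∧ max p.1 0 * K m < 1}, ?_, ?_, ?_⟩
  · exact isOpen_iUnion fun m =>
      (isOpen_lt continuous_snd.norm continuous_const).and
        (isOpen_lt ((continuous_fst.max continuous_const).mul continuous_const) continuous_const)
  · intro p hp
    obtain ⟨m, hm⟩ := exists_nat_gt ‖p.2‖
    exact mem_iUnion.2 ⟨m, hm, by simp [max_eq_right (show p.1 ≤ 0 from hp)]⟩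
  · have key : ∀ (p q : ℝ × E) (i j : ℕ), i ≤ j → ‖p.2‖ < i →
        q ∈ {p : ℝ × E | ‖p.2‖ < j ∧ max p.1 0 * K j < 1} → penroseMap g p = penroseMap g q →
        p = q := by
      intro p q i j hij hpi hqj h
      have hU : p.1 = q.1 := (Prod.ext_iff.1 h).1
      have hpj : p.2 ∈ closedBall (0 : E) j :=
        mem_closedBall_zero_iff.2 (hpi.le.trans (Nat.cast_le.2 hij))
      exact penroseMap_injOn_of_lipschitzOnWith (hK j) ⟨hpj, hU ▸ hqj.2⟩
        ⟨mem_closedBall_zero_iff.2 hqj.1.le, hqj.2⟩ h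
    intro p hp q hq h
    obtain ⟨i, hpi⟩ := mem_iUnion.1 hp
    obtain ⟨j, hqj⟩ := mem_iUnion.1 hq
    rcases le_total i j with hij | hji
    · exact key p q i j hij hpi.1 hqj h
    · exact (key q p j i hji hqj.1 hpi h.symm).symm

end Penrose

theorem stmt0_general {n : ℕ} (a b : EReal) (hb : 0 < b)
    (g : EuclideanSpace ℝ (Fin n) → EuclideanSpace ℝ (Fin n)) (hg : ContDiff ℝ 1 g) :
    ∃ W : Set (ℝ × EuclideanSpace ℝ (Fin n)), IsOpen W ∧
      W ⊆ {p : ℝ × EuclideanSpace ℝ (Fin n) | -a < (p.1 : EReal) ∧ (p.1 : EReal) < b} ∧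
      {p : ℝ × EuclideanSpace ℝ (Fin n) | -a < (p.1 : EReal) ∧ p.1 ≤ 0} ⊆ W ∧
      Set.InjOn (fun p : ℝ × EuclideanSpace ℝ (Fin n) =>
        (p.1, p.2 + max p.1 0 • g p.2)) W := by
  obtain ⟨W, hWopen, hW, hWinj⟩ := hg.exists_isOpen_injOn_penroseMap
  have hstrip : IsOpen {p : ℝ × EuclideanSpace ℝ (Fin n) |
      -a < (p.1 : EReal) ∧ (p.1 : EReal) < b} :=
    (isOpen_lt continuous_const (continuous_coe_real_ereal.comp continuous_fst)).inter
      (isOpen_lt (continuous_coe_real_ereal.comp continuous_fst) continuous_const)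
  refine ⟨W ∩ _, hWopen.inter hstrip, inter_subset_right, fun p hp => ?_,
    hWinj.mono inter_subset_left⟩
  exact ⟨hW hp.2, hp.1, (EReal.coe_nonpos.2 hp.2).trans_lt hb⟩

/-- For `a, b ∈ (0,∞]` and `g : ℝⁿ → ℝⁿ` continuously differentiable,
the map `F(U,X) = (U, X + max U 0 • g X)` on `(-a,b) × ℝⁿ` is injective on some open
set `W` containing `(-a,0] × ℝⁿ`. -/
theorem stmt0 {n : ℕ} (a b : EReal) (ha : 0 < a) (hb : 0 < b)
    (g : EuclideanSpace ℝ (Fin n) → EuclideanSpace ℝ (Fin n)) (hg : ContDiff ℝ 1 g) :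
    ∃ W : Set (ℝ × EuclideanSpace ℝ (Fin n)), IsOpen W ∧
      W ⊆ {p : ℝ × EuclideanSpace ℝ (Fin n) | -a < (p.1 : EReal) ∧ (p.1 : EReal) < b} ∧
      {p : ℝ × EuclideanSpace ℝ (Fin n) | -a < (p.1 : EReal) ∧ p.1 ≤ 0} ⊆ W ∧
      Set.InjOn (fun p : ℝ × EuclideanSpace ℝ (Fin n) =>
        (p.1, p.2 + max p.1 0 • g p.2)) W :=
  stmt0_general a b hb g hg
end

section
/- Let $f : \mathbb{R}^2 \to \mathbb{R}$, $f(X,Y) = -\tfrac12(X^4+Y^4)$, and $F(U,X,Y) = (U, X - X^3 U_+, Y - Y^3 U_+)$ with $U_+ = \max(U,0)$. Then $F$ is injective on the open set $W = \{(U,X,Y) \in \mathbb{R}^3 : U < \tfrac{1}{3}(X^2+Y^2)^{-1}\}$ (with the convention that the condition is vacuous, i.e. always satisfied, when $X = Y = 0$). -/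
/-- For `f(X,Y) = -½(X⁴+Y⁴)` and
`F(U,X,Y) = (U, X - X³·U₊, Y - Y³·U₊)`, the map `F` is injective on
`W = {(U,X,Y) | (X,Y) = (0,0) ∨ U < (3(X²+Y²))⁻¹}`. -/
theorem stmt4 :
    Set.InjOn
      (fun p : ℝ × ℝ × ℝ =>
        (p.1, p.2.1 - p.2.1 ^ 3 * max p.1 0, p.2.2 - p.2.2 ^ 3 * max p.1 0))
      {p : ℝ × ℝ × ℝ |
        (p.2.1 = 0 ∧ p.2.2 = 0) ∨ p.1 < (3 * (p.2.1 ^ 2 + p.2.2 ^ 2))⁻¹} := by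
  rintro ⟨u, x, y⟩ hp ⟨v, x', y'⟩ hq h
  simp only [Prod.mk.injEq] at h
  obtain ⟨h1, h2, h3⟩ := h
  subst h1
  rcases le_or_gt u 0 with hu | hu
  · rw [max_eq_right hu] at h2 h3
    simp only [mul_zero, sub_zero] at h2 h3
    simp [h2, h3]
  · rw [max_eq_left hu.le] at h2 h3
    have key : ∀ a b : ℝ, ((a = 0 ∧ b = 0) ∨ u < (3 * (a ^ 2 + b ^ 2))⁻¹) →
        u * a ^ 2 < 1 / 3 ∧ u * b ^ 2 < 1 / 3 := by
      rintro a b (⟨ha, hb⟩ | hab)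
      · constructor <;> simp [ha, hb]
      · have hs : 0 < a ^ 2 + b ^ 2 := by
          by_contra hs
          push_neg at hs
          have h0 : a ^ 2 + b ^ 2 = 0 := le_antisymm hs (by positivity)
          rw [h0] at hab
          simp at hab
          linarith
        have h3s : (0:ℝ) < 3 * (a ^ 2 + b ^ 2) := by linarith
        have hmul : u * (3 * (a ^ 2 + b ^ 2)) < 1 := by
          have := mul_lt_mul_of_pos_right hab h3s
          rwa [inv_mul_cancel₀ (ne_of_gt h3s)] at this
        constructor <;> nlinarith [sq_nonneg a, sq_nonneg b]
    obtain ⟨hbx, hby⟩ := key x y hp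
    obtain ⟨hbx', hby'⟩ := key x' y' hq
    have hx : x = x' := by
      have hfac : (x - x') * (1 - u * (x ^ 2 + x * x' + x' ^ 2)) = 0 := by
        linear_combination h2
      have hpos : 0 < 1 - u * (x ^ 2 + x * x' + x' ^ 2) := by
        nlinarith [mul_nonneg hu.le (sq_nonneg (x - x'))]
      rcases mul_eq_zero.mp hfac with h | h
      · linarith
      · linarith
    have hy : y = y' := by
      have hfac : (y - y') * (1 - u * (y ^ 2 + y * y' + y' ^ 2)) = 0 := by
        linear_combination h3
      have hpos : 0 < 1 - u * (y ^ 2 + y * y' + y' ^ 2) := by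
        nlinarith [mul_nonneg hu.le (sq_nonneg (y - y'))]
      rcases mul_eq_zero.mp hfac with h | h
      · linarith
      · linarith
    simp [hx, hy]
end
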